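/- In the critical case, the quasi-stationary generating function is Π_{λ_c}(x) = 2(1/√(1-x) - 1), i.e., lim_{n→∞}(g^{∘n}(x) - g^{∘n}(0))/(g^{∘n})'(0) = 2(1/√(1-x) - 1) where g^{∘r}(x) = 1 - (r + 1/√(1-x))^{-2}. -/

import Mathlib

/-!
Under the substitution `x = 1 - t⁻²` the critical generating function acts as the shift
`t ↦ t + 1`. Hence `g^{∘n}(x) = 1 - (n + s)⁻²` with `s = (1 - x)^{-1/2}`, and differentiating at
`0` (where `s = 1 + x/2 + O(x²)`) gives `(g^{∘n})'(0) = (n + 1)⁻³`. The normalised increment is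
then `(n + 1)³ ((n + 1)⁻² - (n + s)⁻²) = (s - 1)(n + 1)(2n + s + 1)/(n + s)²`, which tends to
`2 (s - 1)`.
-/

/-- The critical offspring generating function `g_{λ_c}` (case `h = 1/4`),
extended continuously at `0` by `g(0) = 3/4`. -/
noncomputable def gCrit (x : ℝ) : ℝ :=
  if x = 0 then 3/4
  else 1/x - (1 - x) * (1 - Real.sqrt (1 - x)) / (x^2 / 2)

open Filter Topology Real

lemma gCrit_one_sub_inv_sq {t : ℝ} (ht : 0 < t) :
    gCrit (1 - (t ^ 2)⁻¹) = 1 - ((t + 1) ^ 2)⁻¹ := by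
  rcases eq_or_ne t 1 with rfl | ht1
  · norm_num [gCrit]
  have hne : 1 - (t ^ 2)⁻¹ ≠ 0 := by
    rw [sub_ne_zero, ne_comm, inv_ne_one, ne_eq, pow_eq_one_iff_of_nonneg ht.le two_ne_zero]
    exact ht1
  have hsqrt : √(1 - (1 - (t ^ 2)⁻¹)) = t⁻¹ := by
    rw [sub_sub_cancel, ← inv_pow, sqrt_sq (by positivity)]
  have hfactor : 1 - (t ^ 2)⁻¹ = (t - 1) * (t + 1) / t ^ 2 := by
    field_simp; ring
  have htm1 : t - 1 ≠ 0 := sub_ne_zero.mpr ht1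
  rw [gCrit, if_neg hne, hsqrt, hfactor]
  field_simp
  ring

lemma gCrit_iterate {x : ℝ} (hx : x < 1) (n : ℕ) :
    gCrit^[n] x = 1 - ((n + (√(1 - x))⁻¹) ^ 2)⁻¹ := by
  induction n with
  | zero => simp [sq_sqrt (sub_nonneg.mpr hx.le)]
  | succ n ih =>
    have hpos : 0 < (n : ℝ) + (√(1 - x))⁻¹ := by
      have := sqrt_pos.mpr (sub_pos.mpr hx)
      positivity
    rw [Function.iterate_succ_apply', ih, gCrit_one_sub_inv_sq hpos]
    push_cast
    ring_nf

lemma hasDerivAt_gCrit_iterate_zero (n : ℕ) :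
    HasDerivAt (gCrit^[n]) (((n + 1 : ℝ) ^ 3)⁻¹) 0 := by
  have hsqrt : HasDerivAt (fun x : ℝ => √(1 - x)) (-1 / 2) 0 := by
    simpa using ((hasDerivAt_id (0 : ℝ)).const_sub 1).sqrt (by norm_num)
  have hinv : HasDerivAt (fun x : ℝ => (√(1 - x))⁻¹) (1 / 2) 0 :=
    (hsqrt.inv (by simp)).congr_deriv (by norm_num)
  have hinner : HasDerivAt (fun x : ℝ => (n + (√(1 - x))⁻¹) ^ 2) (n + 1) 0 :=
    ((hinv.const_add (n : ℝ)).pow 2).congr_deriv (by norm_num; ring)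
  have houter := (hinner.inv (by simp only [sub_zero, sqrt_one, inv_one]; positivity)).const_sub 1
  refine (houter.congr_deriv ?_).congr_of_eventuallyEq ?_
  · simp only [sub_zero, sqrt_one, inv_one]
    field_simp
  · filter_upwards [Iio_mem_nhds one_pos] with y hy using gCrit_iterate hy n

lemma tendsto_cube_mul_inv_sq_sub_inv_sq {s : ℝ} (hs : 0 < s) :
    Tendsto (fun n : ℕ => ((n + 1 : ℝ) ^ 3) * (((n + 1 : ℝ) ^ 2)⁻¹ - ((n + s) ^ 2)⁻¹))
      atTop (𝓝 (2 * (s - 1))) := by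
  have hinv : Tendsto (fun n : ℕ => ((n : ℝ) + s)⁻¹) atTop (𝓝 0) :=
    (tendsto_atTop_add_const_right _ s tendsto_natCast_atTop_atTop).inv_tendsto_atTop
  -- `(n + 1) / (n + s) = 1 + (1 - s) / (n + s)` and `(2n + s + 1) / (n + s) = 2 + (1 - s) / (n + s)`
  have hlim : Tendsto (fun n : ℕ => (s - 1) * ((1 + (1 - s) * ((n : ℝ) + s)⁻¹) *
      (2 + (1 - s) * ((n : ℝ) + s)⁻¹)))
      atTop (𝓝 ((s - 1) * ((1 + (1 - s) * 0) * (2 + (1 - s) * 0)))) :=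
    ((tendsto_const_nhds.add (tendsto_const_nhds.mul hinv)).mul
      (tendsto_const_nhds.add (tendsto_const_nhds.mul hinv))).const_mul _
  rw [show 2 * (s - 1) = (s - 1) * ((1 + (1 - s) * 0) * (2 + (1 - s) * 0)) by ring]
  refine hlim.congr fun n => ?_
  have : (n : ℝ) + s ≠ 0 := by positivity
  field_simp
  ring

/-- in the critical case, the quasi-stationary generating function is
`Π_{λ_c}(x) = lim_n (g^{∘n}(x) - g^{∘n}(0))/(g^{∘n})'(0) = 2(1/√(1-x) - 1)`. -/
theorem stmt_12 (d : ℕ → ℝ) (hd : ∀ n : ℕ, HasDerivAt (gCrit^[n]) (d n) 0) :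
    ∀ x ∈ Set.Ico (0 : ℝ) 1,
      Filter.Tendsto (fun n : ℕ => (gCrit^[n] x - gCrit^[n] 0) / d n)
        Filter.atTop (nhds (2 * (1 / Real.sqrt (1 - x) - 1))) := by
  rintro x ⟨-, hx⟩
  have hd_eq (n : ℕ) : d n = ((n + 1 : ℝ) ^ 3)⁻¹ :=
    (hd n).unique (hasDerivAt_gCrit_iterate_zero n)
  have hs : 0 < (√(1 - x))⁻¹ := inv_pos.mpr (sqrt_pos.mpr (sub_pos.mpr hx))
  convert tendsto_cube_mul_inv_sq_sub_inv_sq hs using 2 with n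
  · rw [gCrit_iterate hx, gCrit_iterate one_pos, hd_eq]
    simp only [sub_zero, sqrt_one, inv_one, div_inv_eq_mul]
    ring
  · rw [one_div]
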